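/- Let L be a 3-dimensional real subspace of ℂ³ ⊂ ℝ⁷. Then L admits an orthonormal basis (v₁, v₂, v₃) with φ₀(v₁, v₂, v₃) = 1 (i.e. L is an associative 3-plane in ℝ⁷) if and only if L is special Lagrangian, i.e. ω₀ and Im Ω₀ vanish identically on L. -/

import Mathlib

open scoped RealInnerProductSpace

noncomputable section

abbrev E7 : Type := EuclideanSpace ℝ (Fin 7)

/-- `dxⁱ ∧ dxʲ ∧ dxᵏ` evaluated on the triple `(u, v, w)`. -/
def triDet (u v w : E7) (i j k : Fin 7) : ℝ :=
  Matrix.det !![u i, u j, u k; v i, v j, v k; w i, w j, w k]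

/-- The standard G₂ 3-form `φ₀ = dx¹²³ + dx¹⁴⁵ + dx¹⁶⁷ + dx²⁴⁶ − dx²⁵⁷ − dx³⁴⁷ − dx³⁵⁶`
(here with 0-indexed coordinates). -/
def phi0 (u v w : E7) : ℝ :=
  triDet u v w 0 1 2 + triDet u v w 0 3 4 + triDet u v w 0 5 6 +
    triDet u v w 1 3 5 - triDet u v w 1 4 6 - triDet u v w 2 3 6 - triDet u v w 2 4 5

/-- `ℂ³` with its standard Hermitian inner product. -/
abbrev C3 : Type := EuclideanSpace ℂ (Fin 3)

/-- The inclusion `ℂ³ ⊂ ℝ⁷ = ℝ ⊕ ℂ³` given by the complex coordinates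
`z¹ = x² + ix³`, `z² = x⁴ + ix⁵`, `z³ = x⁶ + ix⁷` (0-indexed: `e₁` is index 0). -/
def toR7 (z : C3) : E7 :=
  (WithLp.equiv 2 (Fin 7 → ℝ)).symm
    ![0, (z 0).re, (z 0).im, (z 1).re, (z 1).im, (z 2).re, (z 2).im]

/-- The basis vector `e₁` spanning the `ℝ` factor of `ℝ⁷ = ℝ ⊕ ℂ³`. -/
def E1 : E7 := EuclideanSpace.single 0 1

/-- The standard Kähler form `ω₀(u, v) = g₀(iu, v)` on `ℂ³`, `g₀ = Re⟨·,·⟩`. -/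
def omegaC3 (u v : C3) : ℝ := (inner ℂ (Complex.I • u) v : ℂ).re

/-- The standard complex volume form `Ω₀ = dz¹∧dz²∧dz³` on `ℂ³`: the determinant of
the complex 3×3 matrix with columns `v₁, v₂, v₃`. -/
def OmegaC3 (v₁ v₂ v₃ : C3) : ℂ :=
  Matrix.det !![v₁ 0, v₂ 0, v₃ 0; v₁ 1, v₂ 1, v₃ 1; v₁ 2, v₂ 2, v₃ 2]


/-!
Restricted to `ℂ³`, `φ₀` is `Re Ω₀`. For a real-orthonormal frame `v` of `ℂ³` the Hermitian Gram
matrix is `1 + iA` with `A` real antisymmetric, with entries `a, b, c` above the diagonal, so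
`|Ω₀(v)|² = det (1 + iA) = 1 - a² - b² - c²`. Hence `Re Ω₀(v) = 1` forces `A = 0` and
`Im Ω₀(v) = 0`: `ω₀` and `Im Ω₀` vanish on the frame, hence on its real span. Conversely, a real-orthonormal basis of a special Lagrangian `L` is Hermitian-orthonormal,
so `Ω₀ = ±1` on it, and swapping two vectors fixes the sign.
-/

section

open Matrix ComplexConjugate

lemma omegaC3_eq_im_inner (u v : C3) : omegaC3 u v = (inner ℂ u v).im := by
  simp [omegaC3]

lemma phi0_toR7 (u v w : C3) : phi0 (toR7 u) (toR7 v) (toR7 w) = (OmegaC3 u v w).re := by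
  simp only [phi0, triDet, OmegaC3, det_fin_three, toR7, WithLp.equiv_symm_apply, of_apply,
    cons_val', cons_val_fin_one, cons_val, Complex.sub_re, Complex.add_re, Complex.mul_re,
    Complex.mul_im]
  ring

lemma OmegaC3_eq_det (v₁ v₂ v₃ : C3) :
    OmegaC3 v₁ v₂ v₃ = (of fun i j => ![v₁, v₂, v₃] j i).det := by
  rw [OmegaC3]
  congr 1
  ext i j
  fin_cases i <;> fin_cases j <;> rfl

lemma OmegaC3_swap (v₁ v₂ v₃ : C3) : OmegaC3 v₂ v₁ v₃ = -OmegaC3 v₁ v₂ v₃ := by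
  simp only [OmegaC3, det_fin_three, of_apply, cons_val', cons_val_fin_one, cons_val]
  ring

lemma conj_mul_self_OmegaC3_eq_det_gram (v₁ v₂ v₃ : C3) :
    conj (OmegaC3 v₁ v₂ v₃) * OmegaC3 v₁ v₂ v₃ = (gram ℂ ![v₁, v₂, v₃]).det := by
  rw [gram_eq_conjTranspose_mul (EuclideanSpace.basisFun (Fin 3) ℂ), det_mul, det_conjTranspose,
    OmegaC3_eq_det]
  rfl

lemma OmegaC3_real_combination (c : Matrix (Fin 3) (Fin 3) ℝ) (v : Fin 3 → C3) :
    OmegaC3 (∑ j, c 0 j • v j) (∑ j, c 1 j • v j) (∑ j, c 2 j • v j) =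
      OmegaC3 (v 0) (v 1) (v 2) * c.det := by
  have hcols : (of fun i k => ![∑ j, c 0 j • v j, ∑ j, c 1 j • v j, ∑ j, c 2 j • v j] k i) =
      (of fun i j => ![v 0, v 1, v 2] j i) * (c.map ((↑) : ℝ → ℂ))ᵀ := by
    ext i k
    fin_cases k <;> simp [mul_apply, Fin.sum_univ_three, Complex.real_smul, mul_comm]
  rw [OmegaC3_eq_det, OmegaC3_eq_det, hcols, det_mul, det_transpose]
  exact congrArg _ (Complex.ofRealHom.map_det c).symm

lemma normSq_OmegaC3_add_sq_im_inner {v₁ v₂ v₃ : C3} (h₁ : ‖v₁‖ = 1) (h₂ : ‖v₂‖ = 1)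
    (h₃ : ‖v₃‖ = 1) (h₁₂ : (inner ℂ v₁ v₂).re = 0) (h₁₃ : (inner ℂ v₁ v₃).re = 0)
    (h₂₃ : (inner ℂ v₂ v₃).re = 0) :
    Complex.normSq (OmegaC3 v₁ v₂ v₃) + (inner ℂ v₁ v₂).im ^ 2 + (inner ℂ v₁ v₃).im ^ 2 +
      (inner ℂ v₂ v₃).im ^ 2 = 1 := by
  have inner_self_of_norm {x : C3} (hx : ‖x‖ = 1) : inner ℂ x x = 1 := by
    simp [inner_self_eq_norm_sq_to_K, hx]
  have inner_of_re {x y : C3} (h : (inner ℂ x y).re = 0) :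
      inner ℂ x y = ((inner ℂ x y).im : ℂ) * Complex.I := by
    apply Complex.ext <;> simp [h]
  have key := conj_mul_self_OmegaC3_eq_det_gram v₁ v₂ v₃
  rw [← Complex.normSq_eq_conj_mul_self, det_fin_three] at key
  simp only [gram_apply, cons_val] at key
  rw [← inner_conj_symm v₂ v₁, ← inner_conj_symm v₃ v₁, ← inner_conj_symm v₃ v₂,
    inner_self_of_norm h₁, inner_self_of_norm h₂, inner_self_of_norm h₃, inner_of_re h₁₂,
    inner_of_re h₁₃, inner_of_re h₂₃] at key
  simp only [map_mul, Complex.conj_ofReal, Complex.conj_I] at key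
  have hC : ((Complex.normSq (OmegaC3 v₁ v₂ v₃) + (inner ℂ v₁ v₂).im ^ 2 +
      (inner ℂ v₁ v₃).im ^ 2 + (inner ℂ v₂ v₃).im ^ 2 : ℝ) : ℂ) = 1 := by
    push_cast
    linear_combination key + ((inner ℂ v₁ v₂).im ^ 2 + (inner ℂ v₁ v₃).im ^ 2 +
      (inner ℂ v₂ v₃).im ^ 2 : ℂ) * Complex.I_sq
  exact_mod_cast hC

lemma im_OmegaC3_eq_zero_of_mem_span {v : Fin 3 → C3} (hv : (OmegaC3 (v 0) (v 1) (v 2)).im = 0)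
    {u₁ u₂ u₃ : C3} (h₁ : u₁ ∈ Submodule.span ℝ (Set.range v))
    (h₂ : u₂ ∈ Submodule.span ℝ (Set.range v)) (h₃ : u₃ ∈ Submodule.span ℝ (Set.range v)) :
    (OmegaC3 u₁ u₂ u₃).im = 0 := by
  obtain ⟨a, rfl⟩ := (Submodule.mem_span_range_iff_exists_fun ℝ).1 h₁
  obtain ⟨b, rfl⟩ := (Submodule.mem_span_range_iff_exists_fun ℝ).1 h₂
  obtain ⟨c, rfl⟩ := (Submodule.mem_span_range_iff_exists_fun ℝ).1 h₃
  have := OmegaC3_real_combination (of ![a, b, c]) v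
  simp only [of_apply, cons_val] at this
  simp [this, Complex.mul_im, hv]

lemma im_inner_eq_zero_of_mem_span {E ι : Type*} [NormedAddCommGroup E] [InnerProductSpace ℂ E]
    [Fintype ι] {v : ι → E} (hv : Orthonormal ℂ v) {u w : E}
    (hu : u ∈ Submodule.span ℝ (Set.range v)) (hw : w ∈ Submodule.span ℝ (Set.range v)) :
    (inner ℂ u w).im = 0 := by
  obtain ⟨a, rfl⟩ := (Submodule.mem_span_range_iff_exists_fun ℝ).1 hu
  obtain ⟨b, rfl⟩ := (Submodule.mem_span_range_iff_exists_fun ℝ).1 hw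
  simp only [← Complex.coe_smul]
  rw [hv.inner_sum]
  simp [Complex.im_sum]

def IsSpecialLagrangian (L : Submodule ℝ C3) : Prop :=
  (∀ u ∈ L, ∀ w ∈ L, omegaC3 u w = 0) ∧ (∀ u ∈ L, ∀ v ∈ L, ∀ w ∈ L, (OmegaC3 u v w).im = 0)

lemma isSpecialLagrangian_span_of_phi0_eq_one {v₁ v₂ v₃ : C3} (h₁ : ‖v₁‖ = 1) (h₂ : ‖v₂‖ = 1)
    (h₃ : ‖v₃‖ = 1) (h₁₂ : (inner ℂ v₁ v₂).re = 0) (h₁₃ : (inner ℂ v₁ v₃).re = 0)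
    (h₂₃ : (inner ℂ v₂ v₃).re = 0) (hφ : phi0 (toR7 v₁) (toR7 v₂) (toR7 v₃) = 1) :
    IsSpecialLagrangian (Submodule.span ℝ {v₁, v₂, v₃}) := by
  have hsum := normSq_OmegaC3_add_sq_im_inner h₁ h₂ h₃ h₁₂ h₁₃ h₂₃
  rw [Complex.normSq_apply, ← phi0_toR7, hφ] at hsum
  have h0 := mul_self_nonneg (OmegaC3 v₁ v₂ v₃).im
  have h0₁₂ := sq_nonneg (inner ℂ v₁ v₂).im
  have h0₁₃ := sq_nonneg (inner ℂ v₁ v₃).im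
  have h0₂₃ := sq_nonneg (inner ℂ v₂ v₃).im
  have hΩ := (sq_nonpos_iff _).1 (by linarith : (OmegaC3 v₁ v₂ v₃).im ^ 2 ≤ 0)
  have hi₁₂ := (sq_nonpos_iff _).1 (by linarith : (inner ℂ v₁ v₂).im ^ 2 ≤ 0)
  have hi₁₃ := (sq_nonpos_iff _).1 (by linarith : (inner ℂ v₁ v₃).im ^ 2 ≤ 0)
  have hi₂₃ := (sq_nonpos_iff _).1 (by linarith : (inner ℂ v₂ v₃).im ^ 2 ≤ 0)
  have inner_eq_zero {x y : C3} (hre : (inner ℂ x y).re = 0) (him : (inner ℂ x y).im = 0) :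
      inner ℂ x y = 0 :=
    Complex.ext hre him
  have horth : Orthonormal ℂ ![v₁, v₂, v₃] := by
    simp [Fin.forall_fin_succ, h₁, h₂, h₃, inner_eq_zero h₁₂ hi₁₂, inner_eq_zero h₁₃ hi₁₃,
      inner_eq_zero h₂₃ hi₂₃]
  have hrange : ({v₁, v₂, v₃} : Set C3) = Set.range ![v₁, v₂, v₃] := by
    rw [range_cons, range_cons_cons_empty, Set.singleton_union]
  rw [hrange]
  refine ⟨fun u hu w hw => ?_, fun u hu v hv w hw => ?_⟩
  · rw [omegaC3_eq_im_inner]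
    exact im_inner_eq_zero_of_mem_span horth hu hw
  · exact im_OmegaC3_eq_zero_of_mem_span (v := ![v₁, v₂, v₃]) hΩ hu hv hw

lemma exists_re_orthonormal_span_eq {E : Type*} [NormedAddCommGroup E] [InnerProductSpace ℂ E]
    (L : Submodule ℝ E) [FiniteDimensional ℝ L] {n : ℕ} (hn : Module.finrank ℝ L = n) :
    ∃ v : Fin n → E, (∀ i, ‖v i‖ = 1) ∧ (∀ i j, i ≠ j → (inner ℂ (v i) (v j)).re = 0) ∧
      Submodule.span ℝ (Set.range v) = L := by
  let _ : InnerProductSpace ℝ E := InnerProductSpace.rclikeToReal ℂ E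
  let b := (stdOrthonormalBasis ℝ L).reindex (finCongr hn)
  refine ⟨fun i => b i, fun i => b.orthonormal.1 i, fun i j hij => b.orthonormal.2 hij, ?_⟩
  rw [show Set.range (fun i => (b i : E)) = L.subtype '' Set.range b from (Set.range_comp _ _),
    Submodule.span_image, ← b.coe_toBasis, b.toBasis.span_eq, Submodule.map_subtype_top]

lemma exists_phi0_eq_one_of_isSpecialLagrangian (L : Submodule ℝ C3)
    (hdim : Module.finrank ℝ L = 3) (hL : IsSpecialLagrangian L) :
    ∃ v₁ v₂ v₃ : C3, v₁ ∈ L ∧ v₂ ∈ L ∧ v₃ ∈ L ∧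
      ‖v₁‖ = 1 ∧ ‖v₂‖ = 1 ∧ ‖v₃‖ = 1 ∧
      (inner ℂ v₁ v₂ : ℂ).re = 0 ∧ (inner ℂ v₁ v₃ : ℂ).re = 0 ∧ (inner ℂ v₂ v₃ : ℂ).re = 0 ∧
      Submodule.span ℝ ({v₁, v₂, v₃} : Set C3) = L ∧
      phi0 (toR7 v₁) (toR7 v₂) (toR7 v₃) = 1 := by
  obtain ⟨v, hnorm, hre, hspan⟩ := exists_re_orthonormal_span_eq L hdim
  have hmem (i : Fin 3) : v i ∈ L := hspan ▸ Submodule.subset_span ⟨i, rfl⟩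
  have him (i j : Fin 3) : (inner ℂ (v i) (v j)).im = 0 := by
    rw [← omegaC3_eq_im_inner]
    exact hL.1 _ (hmem i) _ (hmem j)
  have hsum := normSq_OmegaC3_add_sq_im_inner (hnorm 0) (hnorm 1) (hnorm 2)
    (hre 0 1 (by decide)) (hre 0 2 (by decide)) (hre 1 2 (by decide))
  rw [Complex.normSq_apply, hL.2 _ (hmem 0) _ (hmem 1) _ (hmem 2), him, him, him] at hsum
  have hrange : Set.range v = {v 0, v 1, v 2} := by
    ext x
    simp [Fin.exists_fin_succ, eq_comm]
  rcases mul_self_eq_one_iff.1 (by linarith : (OmegaC3 (v 0) (v 1) (v 2)).re * _ = 1) with h | h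
  · refine ⟨v 0, v 1, v 2, hmem 0, hmem 1, hmem 2, hnorm 0, hnorm 1, hnorm 2,
      hre 0 1 (by decide), hre 0 2 (by decide), hre 1 2 (by decide), hrange ▸ hspan, ?_⟩
    rw [phi0_toR7, h]
  · refine ⟨v 1, v 0, v 2, hmem 1, hmem 0, hmem 2, hnorm 1, hnorm 0, hnorm 2,
      ?_, hre 1 2 (by decide), hre 0 2 (by decide), ?_, ?_⟩
    · rw [← inner_conj_symm, Complex.conj_re, hre 0 1 (by decide)]
    · rw [Set.insert_comm, ← hrange, hspan]
    · rw [phi0_toR7, OmegaC3_swap, Complex.neg_re, h, neg_neg]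

end

/-- For a 3-dimensional real subspace `L ⊆ ℂ³ ⊂ ℝ⁷`: `L` admits an orthonormal basis
`(v₁, v₂, v₃)` with `φ₀(v₁, v₂, v₃) = 1` (i.e. `L` is an associative 3-plane in `ℝ⁷`) if
and only if `L` is special Lagrangian, i.e. `ω₀` and `Im Ω₀` vanish identically on `L`. -/
theorem statement9 (L : Submodule ℝ C3) (hdim : Module.finrank ℝ L = 3) :
    (∃ v₁ v₂ v₃ : C3, v₁ ∈ L ∧ v₂ ∈ L ∧ v₃ ∈ L ∧
      ‖v₁‖ = 1 ∧ ‖v₂‖ = 1 ∧ ‖v₃‖ = 1 ∧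
      (inner ℂ v₁ v₂ : ℂ).re = 0 ∧ (inner ℂ v₁ v₃ : ℂ).re = 0 ∧ (inner ℂ v₂ v₃ : ℂ).re = 0 ∧
      Submodule.span ℝ ({v₁, v₂, v₃} : Set C3) = L ∧
      phi0 (toR7 v₁) (toR7 v₂) (toR7 v₃) = 1) ↔
    ((∀ u ∈ L, ∀ w ∈ L, omegaC3 u w = 0) ∧
      (∀ u ∈ L, ∀ v ∈ L, ∀ w ∈ L, (OmegaC3 u v w).im = 0)) := by
  constructor
  · rintro ⟨v₁, v₂, v₃, -, -, -, h₁, h₂, h₃, h₁₂, h₁₃, h₂₃, rfl, hφ⟩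
    exact isSpecialLagrangian_span_of_phi0_eq_one h₁ h₂ h₃ h₁₂ h₁₃ h₂₃ hφ
  · exact exists_phi0_eq_one_of_isSpecialLagrangian L hdim
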